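/- Let ρ be a d×d complex positive semidefinite matrix with trace 1 and let A_1, …, A_N (N ≥ 2) be d×d Hermitian matrices. Then for each x ∈ {0, 1}: ∑_{i=1}^N I_ρ(A_i) ≥ (1/(2N − 2)) · [ (2/(N(N − 1))) · (∑_{1 ≤ i < j ≤ N} √(I_ρ(A_i + (−1)^x A_j)))² + ∑_{1 ≤ i < j ≤ N} I_ρ(A_i + (−1)^{x+1} A_j) ], where √ denotes the real square root. -/

import Mathlib

/-!
For Hermitian `A` the commutator `[√ρ, A]` is skew-Hermitian, so `I_ρ(A) = ½ ‖[√ρ, A]‖²` (Frobenius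
norm) is a nonnegative quadratic form in `A`; in particular it obeys the parallelogram law
`I_ρ(A + B) + I_ρ(A - B) = 2 I_ρ(A) + 2 I_ρ(B)` and `I_ρ(-B) = I_ρ(B)`. Summing the law over the
`N(N-1)/2` pairs `i < j` gives `∑_{i<j} (I_ρ(A_i ± A_j) + I_ρ(A_i ∓ A_j)) = 2(N-1) ∑_i I_ρ(A_i)`,
and Cauchy–Schwarz bounds `(∑_{i<j} √I_ρ(A_i ± A_j))²` by `N(N-1)/2 · ∑_{i<j} I_ρ(A_i ± A_j)`.
-/

open Matrix Finset
open scoped ComplexOrder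

/-- The positive semidefinite square root `√ρ`, via the continuous functional calculus. -/
noncomputable def msqrt {d : ℕ} (ρ : Matrix (Fin d) (Fin d) ℂ) :
    Matrix (Fin d) (Fin d) ℂ :=
  cfc (fun t : ℝ => Real.sqrt t) ρ

/-- The Wigner–Yanase skew information `I_ρ(A) = −(1/2) Tr([√ρ, A]²)`. -/
noncomputable def wyObs {d : ℕ} (ρ : Matrix (Fin d) (Fin d) ℂ)
    (A : Matrix (Fin d) (Fin d) ℂ) : ℝ :=
  (-(1 / 2 : ℂ) *
    ((msqrt ρ * A - A * msqrt ρ) * (msqrt ρ * A - A * msqrt ρ)).trace).re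

section Pairs

variable {ι : Type*} [Fintype ι] [LinearOrder ι]

lemma sum_filter_fst_lt_snd_add {R : Type*} [CommRing R] (g : ι → R) :
    ∑ p ∈ univ.filter (fun p : ι × ι => p.1 < p.2), (g p.1 + g p.2)
      = ((Fintype.card ι : R) - 1) * ∑ i, g i := by
  have hswap : ∑ p ∈ univ.filter (fun p : ι × ι => p.1 < p.2), g p.2
      = ∑ p ∈ univ.filter (fun p : ι × ι => p.2 < p.1), g p.1 :=
    Finset.sum_equiv (Equiv.prodComm ι ι) (by simp) (by simp)
  have hrow : ∀ i, ∑ j, ((if i < j then g i else 0) + (if j < i then g i else 0))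
      = ((Fintype.card ι : R) - 1) * g i := by
    intro i
    have hoff : ∀ j, (if i < j then g i else 0) + (if j < i then g i else 0)
        = g i - if i = j then g i else 0 := by
      intro j
      rcases lt_trichotomy i j with h | rfl | h
      · simp [h, h.ne, not_lt_of_gt h]
      · simp
      · simp [h, h.ne', not_lt_of_gt h]
    simp [hoff, Finset.sum_sub_distrib, sub_mul]
  rw [Finset.sum_add_distrib, hswap, Finset.sum_filter, Finset.sum_filter,
    Fintype.sum_prod_type, Fintype.sum_prod_type, ← Finset.sum_add_distrib, Finset.mul_sum]
  simp_rw [← Finset.sum_add_distrib, hrow]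

lemma two_mul_card_filter_fst_lt_snd :
    2 * ((univ.filter (fun p : ι × ι => p.1 < p.2)).card : ℝ)
      = Fintype.card ι * (Fintype.card ι - 1) := by
  have h := sum_filter_fst_lt_snd_add (ι := ι) (fun _ => (1 : ℝ))
  simp only [Finset.sum_const, nsmul_eq_mul, Finset.card_univ] at h
  linarith

lemma le_sum_of_parallelogram (hι : 2 ≤ Fintype.card ι) (a : ι → ℝ) (P M : ι → ι → ℝ)
    (hP : ∀ i j, 0 ≤ P i j) (hPM : ∀ i j, P i j + M i j = 2 * a i + 2 * a j) :
    (1 / (2 * (Fintype.card ι : ℝ) - 2)) *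
        ((2 / ((Fintype.card ι : ℝ) * ((Fintype.card ι : ℝ) - 1))) *
            (∑ p ∈ univ.filter (fun p : ι × ι => p.1 < p.2), √(P p.1 p.2)) ^ 2 +
          ∑ p ∈ univ.filter (fun p : ι × ι => p.1 < p.2), M p.1 p.2)
      ≤ ∑ i, a i := by
  set S := univ.filter (fun p : ι × ι => p.1 < p.2)
  set N : ℝ := (Fintype.card ι : ℝ)
  have hN : (2 : ℝ) ≤ N := Nat.ofNat_le_cast.mpr hι
  have hsum : ∑ p ∈ S, P p.1 p.2 + ∑ p ∈ S, M p.1 p.2 = (2 * N - 2) * ∑ i, a i := by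
    rw [← Finset.sum_add_distrib, Finset.sum_congr rfl fun p _ => hPM p.1 p.2,
      sum_filter_fst_lt_snd_add (fun i => 2 * a i), ← Finset.mul_sum]
    ring
  have hCS : (∑ p ∈ S, √(P p.1 p.2)) ^ 2 ≤ S.card * ∑ p ∈ S, P p.1 p.2 := by
    refine (sq_sum_le_card_mul_sum_sq ..).trans_eq ?_
    simp only [Real.sq_sqrt (hP _ _)]
  have hpairs : 2 / (N * (N - 1)) * (∑ p ∈ S, √(P p.1 p.2)) ^ 2 ≤ ∑ p ∈ S, P p.1 p.2 := by
    rw [div_mul_eq_mul_div, div_le_iff₀ (by nlinarith), ← two_mul_card_filter_fst_lt_snd]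
    nlinarith
  calc _ ≤ 1 / (2 * N - 2) * (∑ p ∈ S, P p.1 p.2 + ∑ p ∈ S, M p.1 p.2) :=
        mul_le_mul_of_nonneg_left (by linarith) (one_div_nonneg.mpr (by linarith))
    _ = ∑ i, a i := by
        rw [hsum]
        field_simp [show N - 1 ≠ 0 by linarith]

end Pairs

section SkewInformation

variable {d : ℕ} (ρ : Matrix (Fin d) (Fin d) ℂ)

lemma wyObs_add_add_wyObs_sub (A B : Matrix (Fin d) (Fin d) ℂ) :
    wyObs ρ (A + B) + wyObs ρ (A - B) = 2 * wyObs ρ A + 2 * wyObs ρ B := by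
  have hadd : msqrt ρ * (A + B) - (A + B) * msqrt ρ
      = (msqrt ρ * A - A * msqrt ρ) + (msqrt ρ * B - B * msqrt ρ) := by noncomm_ring
  have hsub : msqrt ρ * (A - B) - (A - B) * msqrt ρ
      = (msqrt ρ * A - A * msqrt ρ) - (msqrt ρ * B - B * msqrt ρ) := by noncomm_ring
  simp only [wyObs, hadd, hsub]
  generalize msqrt ρ * A - A * msqrt ρ = X, msqrt ρ * B - B * msqrt ρ = Y
  have parallelogram : (X + Y) * (X + Y) + (X - Y) * (X - Y) = 2 • (X * X) + 2 • (Y * Y) := by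
    noncomm_ring
  rw [← Complex.add_re, ← mul_add, ← trace_add, parallelogram, trace_add, trace_smul, trace_smul]
  simp only [nsmul_eq_mul, Complex.mul_re]
  norm_num
  ring

lemma wyObs_ofReal_smul (A : Matrix (Fin d) (Fin d) ℂ) (c : ℝ) :
    wyObs ρ ((c : ℂ) • A) = c ^ 2 * wyObs ρ A := by
  rw [wyObs, wyObs, Matrix.mul_smul, Matrix.smul_mul, ← smul_sub, smul_mul_smul, trace_smul,
    smul_eq_mul, mul_left_comm, ← Complex.ofReal_mul, Complex.re_ofReal_mul, sq]

lemma wyObs_nonneg {A : Matrix (Fin d) (Fin d) ℂ} (hA : A.IsHermitian) : 0 ≤ wyObs ρ A := by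
  set C := msqrt ρ * A - A * msqrt ρ
  have hS : (msqrt ρ)ᴴ = msqrt ρ := (IsSelfAdjoint.cfc : IsSelfAdjoint (msqrt ρ))
  have hC : Cᴴ = -C := by
    simp [C, conjTranspose_sub, conjTranspose_mul, hA.eq, hS]
  have h := (Complex.nonneg_iff.mp (posSemidef_conjTranspose_mul_self C).trace_nonneg).1
  rw [hC, Matrix.neg_mul, trace_neg, Complex.neg_re] at h
  change 0 ≤ (-(1 / 2) * (C * C).trace).re
  simp only [Complex.mul_re]
  norm_num
  linarith

end SkewInformation

theorem wy_skew_information_uncertainty_general (d N : ℕ) (hN : 2 ≤ N)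
    (ρ : Matrix (Fin d) (Fin d) ℂ)
    (A : Fin N → Matrix (Fin d) (Fin d) ℂ) (hA : ∀ i, (A i).IsHermitian) :
    ∀ x ∈ ({0, 1} : Set ℕ),
      ∑ i, wyObs ρ (A i) ≥
        (1 / (2 * (N : ℝ) - 2)) *
          ((2 / ((N : ℝ) * ((N : ℝ) - 1))) *
              (∑ p ∈ univ.filter (fun p : Fin N × Fin N => p.1 < p.2),
                Real.sqrt (wyObs ρ (A p.1 + ((-1 : ℂ) ^ x) • A p.2))) ^ 2 +
            ∑ p ∈ univ.filter (fun p : Fin N × Fin N => p.1 < p.2),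
              wyObs ρ (A p.1 + ((-1 : ℂ) ^ (x + 1)) • A p.2)) := by
  rintro x -
  set s : ℝ := (-1) ^ x
  have hs : ((-1 : ℂ) ^ x) = s := by simp [s]
  have hs2 : s ^ 2 = 1 := by rw [← pow_mul, mul_comm, pow_mul, neg_one_sq, one_pow]
  have key := le_sum_of_parallelogram (by rwa [Fintype.card_fin]) (fun i => wyObs ρ (A i))
    (fun i j => wyObs ρ (A i + ((-1 : ℂ) ^ x) • A j))
    (fun i j => wyObs ρ (A i + ((-1 : ℂ) ^ (x + 1)) • A j))
    (fun i j => wyObs_nonneg ρ ((hA i).add ((hA j).smul ((IsSelfAdjoint.one ℂ).neg.pow x))))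
    (fun i j => by
      rw [pow_succ, mul_neg_one, neg_smul, ← sub_eq_add_neg, wyObs_add_add_wyObs_sub, hs,
        wyObs_ofReal_smul, hs2, one_mul])
  rwa [Fintype.card_fin] at key

theorem wy_skew_information_uncertainty (d N : ℕ) (hN : 2 ≤ N)
    (ρ : Matrix (Fin d) (Fin d) ℂ) (hρ : ρ.PosSemidef) (hTr : ρ.trace = 1)
    (A : Fin N → Matrix (Fin d) (Fin d) ℂ) (hA : ∀ i, (A i).IsHermitian) :
    ∀ x ∈ ({0, 1} : Set ℕ),
      ∑ i, wyObs ρ (A i) ≥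
        (1 / (2 * (N : ℝ) - 2)) *
          ((2 / ((N : ℝ) * ((N : ℝ) - 1))) *
              (∑ p ∈ univ.filter (fun p : Fin N × Fin N => p.1 < p.2),
                Real.sqrt (wyObs ρ (A p.1 + ((-1 : ℂ) ^ x) • A p.2))) ^ 2 +
            ∑ p ∈ univ.filter (fun p : Fin N × Fin N => p.1 < p.2),
              wyObs ρ (A p.1 + ((-1 : ℂ) ^ (x + 1)) • A p.2)) :=
  wy_skew_information_uncertainty_general d N hN ρ A hA
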